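/- arXiv:2210.11362 — 3 statements merged into one kernel-verified Lean document; each statement's English description precedes it below -/
import Mathlib

section
/- Let A ∈ ℝ^{I_1×J_1×K} and B ∈ ℝ^{K×J_2×I_2} be 3rd-order tensors, and let M_A ∈ ℝ^{R_1×J_1} and M_B ∈ ℝ^{R_2×J_2} be matrices. Then (A ×_2 M_A) ⊠_2 (B ×_2 M_B) = (A ⊠_2 B) ×_2 (M_B ⊗ M_A), where ⊠_2 denotes the mode-2 subchain product, ×_2 the mode-2 tensor-times-matrix product, and ⊗ the Kronecker product. -/
noncomputable section

/-- Mode-2 subchain product `A ⊠₂ B` of a tensor `A` (with third dimension `K`) and a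
tensor `B` (with first dimension `K`), where `A` has middle (mode-2) dimension `J1`.
The middle index is linearized with the first factor's index varying fastest:
`(A ⊠₂ B)(i, overline{j₁ j₂}, k) = ∑_t A(i, j₁, t) B(t, j₂, k)` (0-based). -/
def sub2 (K J1 : ℕ) (A B : ℕ → ℕ → ℕ → ℝ) : ℕ → ℕ → ℕ → ℝ :=
  fun i j k => ∑ t ∈ Finset.range K, A i (j % J1) t * B t (j / J1) k

/-- Mode-2 tensor-times-matrix product: `(X ×₂ U)(i, r, k) = ∑_{j<J} X(i, j, k) U(r, j)`. -/
def ttm2 (J : ℕ) (X : ℕ → ℕ → ℕ → ℝ) (U : ℕ → ℕ → ℝ) : ℕ → ℕ → ℕ → ℝ :=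
  fun i r k => ∑ j ∈ Finset.range J, X i j k * U r j

/-- Kronecker product `A ⊗ B` where `B` is a `p × q` matrix: the indices of the second
factor vary fastest, i.e. `(A ⊗ B)(overline{k i}, overline{l j}) = A(i,j) B(k,l)` (0-based). -/
def kron (p q : ℕ) (A B : ℕ → ℕ → ℝ) : ℕ → ℕ → ℝ :=
  fun i j => A (i / p) (j / q) * B (i % p) (j % q)

lemma sum_range_mul (a b : ℕ) (f : ℕ → ℝ) :
    ∑ m ∈ Finset.range (a * b), f m
      = ∑ q ∈ Finset.range b, ∑ r ∈ Finset.range a, f (r + q * a) := by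
  rw [← Finset.sum_product']
  apply Finset.sum_nbij' (i := fun m => (m / a, m % a)) (j := fun p => p.2 + p.1 * a)
  · intro m hm
    simp only [Finset.mem_range] at hm
    have ha : 0 < a := by
      rcases Nat.eq_zero_or_pos a with h | h
      · subst h; simp at hm
      · exact h
    simp only [Finset.mem_product, Finset.mem_range]
    refine ⟨(Nat.div_lt_iff_lt_mul ha).2 ?_, Nat.mod_lt _ ha⟩
    rwa [Nat.mul_comm]
  · intro p hp
    simp only [Finset.mem_product, Finset.mem_range] at hp
    simp only [Finset.mem_range]
    calc p.2 + p.1 * a < a + p.1 * a := by omega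
    _ = (p.1 + 1) * a := by ring
    _ ≤ b * a := Nat.mul_le_mul_right _ (by omega)
    _ = a * b := Nat.mul_comm _ _
  · intro m hm; simp [Nat.mod_add_div']
  · intro p hp
    simp only [Finset.mem_product, Finset.mem_range] at hp
    have ha : 0 < a := by omega
    ext
    · simp [Nat.add_mul_div_right _ _ ha, Nat.div_eq_of_lt hp.2]
    · simp [Nat.add_mul_mod_self_right, Nat.mod_eq_of_lt hp.2]
  · intro m hm; simp [Nat.mod_add_div']

/-- **Subchain product and TTM interchange.**
For `A ∈ ℝ^{I1 × J1 × K}`, `B ∈ ℝ^{K × J2 × I2}`, `M_A ∈ ℝ^{R1 × J1}`, `M_B ∈ ℝ^{R2 × J2}`: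
`(A ×₂ M_A) ⊠₂ (B ×₂ M_B) = (A ⊠₂ B) ×₂ (M_B ⊗ M_A)` (as tensors of size
`I1 × R1·R2 × I2`, stated entrywise). -/
theorem subchain_ttm_kron (I1 J1 K J2 I2 R1 R2 : ℕ)
    (A : ℕ → ℕ → ℕ → ℝ) (B : ℕ → ℕ → ℕ → ℝ) (MA MB : ℕ → ℕ → ℝ) :
    ∀ i j k, i < I1 → j < R1 * R2 → k < I2 →
      sub2 K R1 (ttm2 J1 A MA) (ttm2 J2 B MB) i j k =
        ttm2 (J1 * J2) (sub2 K J1 A B) (kron R1 J1 MB MA) i j k := by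
  intro i j k _ _ _
  simp only [sub2, ttm2, kron]
  rw [sum_range_mul J1 J2]
  have hrhs : ∀ j2 ∈ Finset.range J2, ∀ j1 ∈ Finset.range J1,
      ((∑ t ∈ Finset.range K, A i ((j1 + j2 * J1) % J1) t * B t ((j1 + j2 * J1) / J1) k) *
        (MB (j / R1) ((j1 + j2 * J1) / J1) * MA (j % R1) ((j1 + j2 * J1) % J1)))
      = ∑ t ∈ Finset.range K,
          A i j1 t * MA (j % R1) j1 * (B t j2 k * MB (j / R1) j2) := by
    intro j2 _ j1 hj1
    simp only [Finset.mem_range] at hj1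
    have ha : 0 < J1 := by omega
    rw [Nat.add_mul_mod_self_right, Nat.mod_eq_of_lt hj1,
      Nat.add_mul_div_right _ _ ha, Nat.div_eq_of_lt hj1, Nat.zero_add,
      Finset.sum_mul]
    exact Finset.sum_congr rfl fun t _ => by ring
  rw [Finset.sum_congr rfl fun j2 hj2 => Finset.sum_congr rfl (hrhs j2 hj2)]
  rw [Finset.sum_comm]
  rw [Finset.sum_congr rfl fun j1 _ => Finset.sum_comm]
  rw [Finset.sum_comm]
  exact Finset.sum_congr rfl fun t _ => by
    rw [Finset.sum_mul_sum]
end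
end

section
/- Let A ∈ ℝ^{I_1×J×K_1}, B ∈ ℝ^{K_1×R×L_1}, C ∈ ℝ^{I_2×J×K_2}, and D ∈ ℝ^{K_2×R×L_2} be 3rd-order tensors. Then (A ⊠_2 B)_{[2]}^T (C ⊠_2 D)_{[2]} = ( (Σ_{r=1}^{R} B(r)^T ∘ D(r)^T) ×_{2,4}^{1,3} (Σ_{j=1}^{J} A(j)^T ∘ C(j)^T) )_{<2>}, where Σ_{r} B(r)^T ∘ D(r)^T ∈ ℝ^{L_1×K_1×L_2×K_2} and Σ_{j} A(j)^T ∘ C(j)^T ∈ ℝ^{K_1×I_1×K_2×I_2} are 4th-order tensors. -/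
noncomputable section


lemma sum_mod_div (J R : ℕ) (f : ℕ → ℕ → ℝ) :
    ∑ p ∈ Finset.range (J * R), f (p % J) (p / J) =
      ∑ j ∈ Finset.range J, ∑ r ∈ Finset.range R, f j r := by
  rw [← Finset.sum_product']
  refine Finset.sum_nbij' (fun p => (p % J, p / J)) (fun q => q.1 + J * q.2) ?_ ?_ ?_ ?_ ?_
  · intro p hp
    simp only [Finset.mem_range] at hp
    have hJ : 0 < J := Nat.pos_of_ne_zero fun h => by simp [h] at hp
    simp only [Finset.mem_product, Finset.mem_range]
    exact ⟨Nat.mod_lt _ hJ, Nat.div_lt_iff_lt_mul hJ |>.mpr (by linarith [Nat.mul_comm J R])⟩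
  · intro q hq
    simp only [Finset.mem_product, Finset.mem_range] at hq
    simp only [Finset.mem_range]
    calc q.1 + J * q.2 < J + J * q.2 := by omega
    _ = J * (q.2 + 1) := by ring
    _ ≤ J * R := Nat.mul_le_mul_left _ hq.2
  · intro p hp; dsimp only; exact Nat.mod_add_div p J
  · intro q hq
    simp only [Finset.mem_product, Finset.mem_range] at hq
    have h1 : (q.1 + J * q.2) % J = q.1 := by
      rw [Nat.add_mul_mod_self_left, Nat.mod_eq_of_lt hq.1]
    have h2 : (q.1 + J * q.2) / J = q.2 := by
      rw [Nat.add_mul_div_left _ _ (Nat.pos_of_ne_zero (by omega)), Nat.div_eq_of_lt hq.1]; omega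
    rw [h1, h2]
  · intro p hp; simp

lemma sum4_comm (a b c d : ℕ) (f : ℕ → ℕ → ℕ → ℕ → ℝ) :
    ∑ j ∈ Finset.range a, ∑ r ∈ Finset.range b, ∑ t ∈ Finset.range c,
      ∑ s ∈ Finset.range d, f j r t s =
    ∑ t ∈ Finset.range c, ∑ s ∈ Finset.range d, ∑ r ∈ Finset.range b,
      ∑ j ∈ Finset.range a, f j r t s := by
  conv_lhs => enter [2, j]; rw [Finset.sum_comm]
  rw [Finset.sum_comm]
  conv_lhs => enter [2, t, 2, j]; rw [Finset.sum_comm]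
  conv_lhs => enter [2, t]; rw [Finset.sum_comm]
  conv_lhs => enter [2, t, 2, s]; rw [Finset.sum_comm]

/-- General contracted tensor product of 4th-order tensors:
`(A ×_{2,4}^{1,3} B)(i₁, i₂, r₁, r₂) = ∑_{j<J} ∑_{k<K} A(i₁, j, r₁, k) B(j, i₂, k, r₂)`. -/
def gcon (J K : ℕ) (A B : ℕ → ℕ → ℕ → ℕ → ℝ) : ℕ → ℕ → ℕ → ℕ → ℝ :=
  fun i1 i2 r1 r2 =>
    ∑ j ∈ Finset.range J, ∑ k ∈ Finset.range K, A i1 j r1 k * B j i2 k r2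

/-- **Gram matrix of a binary subchain product** (Proposition on subchain Gram).
For `A ∈ ℝ^{I1×J×K1}`, `B ∈ ℝ^{K1×R×L1}`, `C ∈ ℝ^{I2×J×K2}`, `D ∈ ℝ^{K2×R×L2}`:
`(A ⊠₂ B)ᵀ_{[2]} (C ⊠₂ D)_{[2]}
  = ((∑_r B(r)ᵀ ∘ D(r)ᵀ) ×_{2,4}^{1,3} (∑_j A(j)ᵀ ∘ C(j)ᵀ))_{<2>}`.
The left-hand side is stated entrywise at position `(overline{l₁ i₁}, overline{l₂ i₂})`
(columns of the mode-2 unfolding of a 3rd-order tensor are indexed by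
`overline{i₃ i₁}`, third mode fastest), and the `<2>`-unfolding of the 4th-order
right-hand side at the same position is its entry `(l₁, i₁, l₂, i₂)`.
Here `(∑_r B(r)ᵀ ∘ D(r)ᵀ)(w,x,y,z) = ∑_r B(x,r,w) D(z,r,y)` and
`(∑_j A(j)ᵀ ∘ C(j)ᵀ)(w,x,y,z) = ∑_j A(x,j,w) C(z,j,y)`. -/
theorem subchain_gram_binary (I1 J K1 L1 I2 K2 L2 R : ℕ)
    (A B C D : ℕ → ℕ → ℕ → ℝ) :
    ∀ l1 i1 l2 i2, l1 < L1 → i1 < I1 → l2 < L2 → i2 < I2 →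
      (∑ p ∈ Finset.range (J * R),
          sub2 K1 J A B i1 p l1 * sub2 K2 J C D i2 p l2) =
        gcon K1 K2
          (fun w x y z => ∑ r ∈ Finset.range R, B x r w * D z r y)
          (fun w x y z => ∑ j ∈ Finset.range J, A x j w * C z j y)
          l1 i1 l2 i2 := by
  intro l1 i1 l2 i2 _ _ _ _
  simp only [sub2, gcon]
  rw [sum_mod_div J R (fun j r => (∑ t ∈ Finset.range K1, A i1 j t * B t r l1) *
    ∑ s ∈ Finset.range K2, C i2 j s * D s r l2)]
  simp only [Finset.sum_mul, Finset.mul_sum]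
  conv_lhs => rw [sum4_comm]
  conv_lhs => rw [Finset.sum_comm]
  conv_lhs => enter [2, t, 2, s]; rw [Finset.sum_comm]
  refine Finset.sum_congr rfl fun t _ => Finset.sum_congr rfl fun s _ =>
    Finset.sum_congr rfl fun r _ => Finset.sum_congr rfl fun j _ => by ring
end
end

section
/- Let X ∈ ℝ^{I_1×⋯×I_N} admit a tensor ring decomposition with cores G_j ∈ ℝ^{R_j×I_j×R_{j+1}} (R_{N+1} = R_1), i.e., X(i_1,…,i_N) = Trace(G_1(i_1) G_2(i_2) ⋯ G_N(i_N)) for all index tuples. Then for every n ∈ {1,…,N}, the mode-n unfolding of X factors as X_{[n]} = G_{n(2)} (G^{≠n}_{[2]})^T, where G_{n(2)} is the classical mode-2 unfolding of G_n and G^{≠n} is the subchain tensor with lateral slices G^{≠n}(overline{i_{n+1} ⋯ i_N i_1 ⋯ i_{n−1}}) = ∏_{j=n+1}^{N} G_j(i_j) ∏_{j=1}^{n−1} G_j(i_j). -/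
noncomputable section

/-- Column-major linearization of the multi-index `(i 0, …, i (m-1))` with respect to the
dimensions `J` (0-based version of `overline{i₁ i₂ ⋯ i_m}`, first index fastest). -/
def lin (J : ℕ → ℕ) (m : ℕ) (i : ℕ → ℕ) : ℕ :=
  ∑ k ∈ Finset.range m, i k * ∏ l ∈ Finset.range k, J l

/-- Matrix product with inner dimension `K`. -/
def matMul (K : ℕ) (A B : ℕ → ℕ → ℝ) : ℕ → ℕ → ℝ :=
  fun i j => ∑ t ∈ Finset.range K, A i t * B t j

/-- `matChain L M t = M 0 * M 1 * ⋯ * M t`, where `M k` is an `L k × L (k+1)` matrix. -/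
def matChain (L : ℕ → ℕ) (M : ℕ → ℕ → ℕ → ℝ) : ℕ → ℕ → ℕ → ℝ
  | 0 => M 0
  | t + 1 => matMul (L (t + 1)) (matChain L M t) (M (t + 1))

lemma matChain_congr (L L' : ℕ → ℕ) (M M' : ℕ → ℕ → ℕ → ℝ) (t : ℕ)
    (hL : ∀ k, 1 ≤ k → k ≤ t → L k = L' k) (hM : ∀ k, k ≤ t → M k = M' k) :
    matChain L M t = matChain L' M' t := by
  induction t with
  | zero => exact hM 0 le_rfl
  | succ t ih =>
    show matMul (L (t+1)) (matChain L M t) (M (t+1)) =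
      matMul (L' (t+1)) (matChain L' M' t) (M' (t+1))
    rw [hL (t+1) (by omega) le_rfl, hM (t+1) le_rfl,
      ih (fun k h1 h2 => hL k h1 (by omega)) (fun k h => hM k (by omega))]

lemma matChain_peel (L : ℕ → ℕ) (M : ℕ → ℕ → ℕ → ℝ) (t : ℕ) (a b : ℕ) :
    matChain L M (t+1) a b =
      ∑ c ∈ Finset.range (L 1), M 0 a c *
        matChain (fun k => L (k+1)) (fun k => M (k+1)) t c b := by
  induction t generalizing b with
  | zero => simp [matChain, matMul]
  | succ t ih =>
    show matMul (L (t+2)) (matChain L M (t+1)) (M (t+2)) a b = _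
    have : (matChain (fun k => L (k+1)) (fun k => M (k+1)) (t+1)) =
        matMul (L (t+2)) (matChain (fun k => L (k+1)) (fun k => M (k+1)) t) (M (t+2)) := rfl
    simp only [matMul, this, ih]
    simp only [Finset.sum_mul, Finset.mul_sum, mul_assoc]
    rw [Finset.sum_comm]

lemma matChain_split (L : ℕ → ℕ) (M : ℕ → ℕ → ℕ → ℝ) (p q : ℕ) (a b : ℕ) :
    matChain L M (p + q + 1) a b =
      ∑ c ∈ Finset.range (L (p+1)), matChain L M p a c *
        matChain (fun k => L (p+1+k)) (fun k => M (p+1+k)) q c b := by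
  induction q generalizing b with
  | zero =>
    show matMul (L (p+1)) (matChain L M p) (M (p+1)) a b = _
    simp [matMul, matChain]
  | succ q ih =>
    show matMul (L (p+q+2)) (matChain L M (p+q+1)) (M (p+q+2)) a b = _
    have : (matChain (fun k => L (p+1+k)) (fun k => M (p+1+k)) (q+1)) =
        matMul (L (p+1+(q+1))) (matChain (fun k => L (p+1+k)) (fun k => M (p+1+k)) q)
          (M (p+1+(q+1))) := rfl
    simp only [matMul, this, ih]
    have hpq : p+1+(q+1) = p+q+2 := by omega
    simp only [hpq, Finset.sum_mul, Finset.mul_sum, mul_assoc]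
    rw [Finset.sum_comm]

lemma trace_rotate (L : ℕ → ℕ) (M : ℕ → ℕ → ℕ → ℝ) (N n : ℕ) (hN : 2 ≤ N) (hn : n < N) :
    ∑ a ∈ Finset.range (L 0), matChain L M (N-1) a a
      = ∑ r ∈ Finset.range (L n), ∑ s ∈ Finset.range (L ((n+1) % N)),
          M n r s * matChain (fun t => L ((n+1+t) % N)) (fun t => M ((n+1+t) % N)) (N-2) s r := by
  rcases Nat.eq_zero_or_pos n with rfl | hn0
  · -- n = 0
    obtain ⟨m, rfl⟩ : ∃ m, N = m + 2 := ⟨N-2, by omega⟩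
    have e1 : m + 2 - 1 = m + 1 := by omega
    have e2 : m + 2 - 2 = m := by omega
    have e3 : (0+1) % (m+2) = 1 := by rw [Nat.mod_eq_of_lt (by omega)]
    rw [e1, e2, e3]
    have hC : matChain (fun t => L ((0+1+t) % (m+2))) (fun t => M ((0+1+t) % (m+2))) m
        = matChain (fun k => L (k+1)) (fun k => M (k+1)) m := by
      apply matChain_congr
      · intro k h1 h2
        have hk : (0+1+k) % (m+2) = k+1 := by
          rw [Nat.mod_eq_of_lt (by omega)]; omega
        rw [hk]
      · intro k h
        have hk : (0+1+k) % (m+2) = k+1 := by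
          rw [Nat.mod_eq_of_lt (by omega)]; omega
        rw [hk]
    rw [hC]
    exact Finset.sum_congr rfl fun a _ => matChain_peel L M m a a
  · by_cases hlast : n + 1 = N
    · obtain ⟨m, rfl⟩ : ∃ m, n = m + 1 := ⟨n-1, by omega⟩
      subst hlast
      have e1 : m + 1 + 1 - 1 = m + 1 := by omega
      have e2 : m + 1 + 1 - 2 = m := by omega
      have e3 : (m + 1 + 1) % (m + 1 + 1) = 0 := Nat.mod_self _
      rw [e1, e2, e3]
      have hC : matChain (fun t => L ((m+1+1+t) % (m+1+1))) (fun t => M ((m+1+1+t) % (m+1+1))) m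
          = matChain L M m := by
        apply matChain_congr
        · intro k h1 h2
          have hk : (m+1+1+k) % (m+1+1) = k := by
            rw [Nat.add_mod_left, Nat.mod_eq_of_lt (by omega)]
          rw [hk]
        · intro k h
          have hk : (m+1+1+k) % (m+1+1) = k := by
            rw [Nat.add_mod_left, Nat.mod_eq_of_lt (by omega)]
          rw [hk]
      rw [hC]
      have hdef : ∀ a, matChain L M (m+1) a a
          = ∑ t ∈ Finset.range (L (m+1)), matChain L M m a t * M (m+1) t a := fun a => rfl
      simp only [hdef]
      rw [Finset.sum_comm]
      exact Finset.sum_congr rfl fun t _ => Finset.sum_congr rfl fun a _ => mul_comm _ _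
    · obtain ⟨p, rfl⟩ : ∃ p, n = p + 1 := ⟨n-1, by omega⟩
      obtain ⟨m, rfl⟩ : ∃ m, N = p + m + 3 := ⟨N-p-3, by omega⟩
      have e1 : p + m + 3 - 1 = p + (m+1) + 1 := by omega
      have e2 : p + m + 3 - 2 = m + p + 1 := by omega
      have e3 : (p+1+1) % (p+m+3) = p+2 := by
        rw [Nat.mod_eq_of_lt (by omega)]
      rw [e1, e2, e3]
      set L2 : ℕ → ℕ := fun t => L ((p+1+1+t) % (p+m+3)) with hL2
      set M2 : ℕ → ℕ → ℕ → ℝ := fun t => M ((p+1+1+t) % (p+m+3)) with hM2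
      have hmod1 : ∀ k, k ≤ m → (p+1+1+k) % (p+m+3) = p+2+k := by
        intro k hk
        rw [Nat.mod_eq_of_lt (by omega)]
      have hmod2 : ∀ k, k ≤ p + 1 → (p+1+1+(m+1+k)) % (p+m+3) = k := by
        intro k hk
        rw [show p+1+1+(m+1+k) = (p+m+3)+k by omega, Nat.add_mod_left,
          Nat.mod_eq_of_lt (by omega)]
      have hE : matChain L2 M2 m
          = matChain (fun k => L (p+2+k)) (fun k => M (p+2+k)) m := by
        apply matChain_congr
        · intro k h1 h2
          show L ((p+1+1+k) % (p+m+3)) = L (p+2+k)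
          rw [hmod1 k h2]
        · intro k h
          show M ((p+1+1+k) % (p+m+3)) = M (p+2+k)
          rw [hmod1 k h]
      have hA : matChain (fun k => L2 (m+1+k)) (fun k => M2 (m+1+k)) p = matChain L M p := by
        apply matChain_congr
        · intro k h1 h2
          show L ((p+1+1+(m+1+k)) % (p+m+3)) = L k
          rw [hmod2 k (by omega)]
        · intro k h
          show M ((p+1+1+(m+1+k)) % (p+m+3)) = M k
          rw [hmod2 k (by omega)]
      have hL2m : L2 (m+1) = L 0 := by
        show L ((p+1+1+(m+1)) % (p+m+3)) = L 0
        rw [show p+1+1+(m+1) = (p+m+3)+0 by omega, Nat.add_mod_left, Nat.mod_eq_of_lt (by omega)]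
      have hshift : matChain (fun k => L (p+1+(k+1))) (fun k => M (p+1+(k+1))) m
          = matChain (fun k => L (p+2+k)) (fun k => M (p+2+k)) m := by
        apply matChain_congr
        · intro k h1 h2
          show L (p+1+(k+1)) = L (p+2+k)
          rw [show p+1+(k+1) = p+2+k by omega]
        · intro k h
          show M (p+1+(k+1)) = M (p+2+k)
          rw [show p+1+(k+1) = p+2+k by omega]
      have hL1 : (∑ a ∈ Finset.range (L 0), matChain L M (p+(m+1)+1) a a)
          = ∑ a ∈ Finset.range (L 0), ∑ c ∈ Finset.range (L (p+1)),
              matChain L M p a c * ∑ s ∈ Finset.range (L (p+2)),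
                M (p+1) c s * matChain (fun k => L (p+2+k)) (fun k => M (p+2+k)) m s a := by
        refine Finset.sum_congr rfl fun a _ => ?_
        rw [matChain_split L M p (m+1) a a]
        refine Finset.sum_congr rfl fun c _ => ?_
        congr 1
        rw [matChain_peel (fun k => L (p+1+k)) (fun k => M (p+1+k)) m c a]
        rw [hshift]
      have hR : (∑ r ∈ Finset.range (L (p+1)), ∑ s ∈ Finset.range (L (p+2)),
            M (p+1) r s * matChain L2 M2 (m+p+1) s r)
          = ∑ r ∈ Finset.range (L (p+1)), ∑ s ∈ Finset.range (L (p+2)),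
              M (p+1) r s * ∑ c ∈ Finset.range (L 0),
                matChain (fun k => L (p+2+k)) (fun k => M (p+2+k)) m s c * matChain L M p c r := by
        refine Finset.sum_congr rfl fun r _ => Finset.sum_congr rfl fun s _ => ?_
        congr 1
        rw [matChain_split L2 M2 m p s r, hL2m]
        refine Finset.sum_congr rfl fun c _ => ?_
        rw [hE, hA]
      rw [hL1, hR]
      simp only [Finset.mul_sum]
      rw [Finset.sum_comm]
      refine Finset.sum_congr rfl fun c _ => ?_
      rw [Finset.sum_comm]
      refine Finset.sum_congr rfl fun s _ => Finset.sum_congr rfl fun a _ => ?_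
      ring

/-- **Mode-n unfolding of a tensor in TR format.**
Let `X ∈ ℝ^{I 0 × ⋯ × I (N-1)}` admit the TR decomposition
`X(i) = Trace (G 0 (i 0) · G 1 (i 1) ⋯ G (N-1) (i (N-1)))` with cores
`G j ∈ ℝ^{R j × I j × R ((j+1) % N)}` (0-based).  Let `G^{≠n}` be the subchain tensor,
defined slice-wise as the cyclic product of the lateral slices of all cores except the
`n`-th one (columns of its mode-2 unfolding are indexed by `overline{i₃ i₁}`, third mode
fastest).  Then `X_{[n]} = G_{n(2)} (G^{≠n}_{[2]})ᵀ`: entrywise, for every in-range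
multi-index `i`,
`X(i) = ∑_{r < R n} ∑_{s < R (n+1)} G n (r, i n, s) · G^{≠n}(s, overline{…}, r)`. -/
theorem tr_mode_n_unfolding_factorization (N : ℕ) (hN : 2 ≤ N) (n : ℕ) (hn : n < N)
    (R I : ℕ → ℕ) (G : ℕ → ℕ → ℕ → ℕ → ℝ)
    (X : (ℕ → ℕ) → ℝ)
    (hX : ∀ i : ℕ → ℕ, (∀ k, k < N → i k < I k) →
      X i = ∑ a ∈ Finset.range (R 0),
        matChain R (fun k r s => G k r (i k) s) (N - 1) a a)
    (Gne : ℕ → ℕ → ℕ → ℝ)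
    (hGne : ∀ i : ℕ → ℕ, (∀ k, k < N → i k < I k) →
      ∀ a b, a < R ((n + 1) % N) → b < R n →
        Gne a (lin (fun t => I ((n + 1 + t) % N)) (N - 1)
            (fun t => i ((n + 1 + t) % N))) b =
          matChain (fun t => R ((n + 1 + t) % N))
            (fun t r s => G ((n + 1 + t) % N) r (i ((n + 1 + t) % N)) s) (N - 2) a b) :
    ∀ i : ℕ → ℕ, (∀ k, k < N → i k < I k) →
      X i = ∑ r ∈ Finset.range (R n), ∑ s ∈ Finset.range (R ((n + 1) % N)),
        G n r (i n) s *
          Gne s (lin (fun t => I ((n + 1 + t) % N)) (N - 1)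
            (fun t => i ((n + 1 + t) % N))) r := by
  intro i hi
  rw [hX i hi, trace_rotate R (fun k r s => G k r (i k) s) N n hN hn]
  refine Finset.sum_congr rfl fun r hr => Finset.sum_congr rfl fun s hs => ?_
  rw [hGne i hi s r (Finset.mem_range.mp hs) (Finset.mem_range.mp hr)]
end
end
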